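/- arXiv:2401.01601 — 2 statements merged into one kernel-verified Lean document; each statement's English description precedes it below -/
import Mathlib

section
/- Suppose (x_j)_{j≥1} is a sequence of real numbers satisfying, for every integer n ≥ 1, the recursion 1 = 2^n · n! · x_n + ∑_{j=1}^{n-1} (n!/(n-j)!) · 2^j · x_j. Then x_n = (-1)^{n+1}/(2^n · n!) for every n ≥ 1. -/
/-- Uniqueness of the one-dimensional Moebius values: if `(x_j)` satisfies the recursion
`1 = 2^n · n! · x_n + ∑_{j=1}^{n-1} (n!/(n-j)!) · 2^j · x_j` for all `n ≥ 1`, then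
`x_n = (-1)^(n+1)/(2^n · n!)`. -/
theorem moebius_circle_unique (x : ℕ → ℝ)
    (hx : ∀ n : ℕ, 1 ≤ n →
      (1 : ℝ) = 2 ^ n * Nat.factorial n * x n +
        ∑ j ∈ Finset.Ico 1 n,
          ((Nat.factorial n : ℝ) / (Nat.factorial (n - j) : ℝ)) * 2 ^ j * x j) :
    ∀ n : ℕ, 1 ≤ n → x n = (-1) ^ (n + 1) / (2 ^ n * Nat.factorial n) := by
  intro n
  induction n using Nat.strong_induction_on with
  | _ n IH =>
  intro hn
  have h := hx n hn
  have hsum : ∑ j ∈ Finset.Ico 1 n,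
      ((Nat.factorial n : ℝ) / (Nat.factorial (n - j) : ℝ)) * 2 ^ j * x j
      = ∑ j ∈ Finset.Ico 1 n, (-1 : ℝ) ^ (j + 1) * (n.choose j) := by
    apply Finset.sum_congr rfl
    intro j hj
    obtain ⟨h1, h2⟩ := Finset.mem_Ico.mp hj
    rw [IH j h2 h1]
    have key : ((n.choose j : ℝ)) * j.factorial * (n - j).factorial = n.factorial := by
      exact_mod_cast congrArg (Nat.cast : ℕ → ℝ)
        (Nat.choose_mul_factorial_mul_factorial (le_of_lt h2))
    have hf1 : (j.factorial : ℝ) ≠ 0 := Nat.cast_ne_zero.mpr j.factorial_ne_zero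
    have hf2 : ((n - j).factorial : ℝ) ≠ 0 := Nat.cast_ne_zero.mpr (n - j).factorial_ne_zero
    have h2j : (2 : ℝ) ^ j ≠ 0 := by positivity
    field_simp
    linear_combination (-1 : ℝ) * key
  have hS : ∑ j ∈ Finset.range (n + 1), (-1 : ℝ) ^ j * (n.choose j) = 0 := by
    have := Int.alternating_sum_range_choose_of_ne (Nat.one_le_iff_ne_zero.mp hn)
    exact_mod_cast this
  have hsplit : ∑ j ∈ Finset.range (n + 1), (-1 : ℝ) ^ j * (n.choose j)
      = 1 + (∑ j ∈ Finset.Ico 1 n, (-1 : ℝ) ^ j * (n.choose j)) + (-1) ^ n * (n.choose n) := by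
    rw [Finset.range_eq_Ico, Finset.sum_eq_sum_Ico_succ_bot (by omega : 0 < n + 1),
      Finset.sum_Ico_succ_top (by omega : 1 ≤ n)]
    simp [add_assoc]
  have hsum2 : ∑ j ∈ Finset.Ico 1 n, (-1 : ℝ) ^ (j + 1) * (n.choose j)
      = 1 + (-1) ^ n := by
    have : ∑ j ∈ Finset.Ico 1 n, (-1 : ℝ) ^ (j + 1) * (n.choose j)
        = -∑ j ∈ Finset.Ico 1 n, (-1 : ℝ) ^ j * (n.choose j) := by
      rw [← Finset.sum_neg_distrib]
      apply Finset.sum_congr rfl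
      intro j _
      ring
    rw [this]
    have := hsplit
    rw [hS, Nat.choose_self] at this
    push_cast at this
    linarith
  rw [hsum, hsum2] at h
  have hpos : (2 : ℝ) ^ n * n.factorial ≠ 0 := by positivity
  rw [eq_div_iff hpos]
  linear_combination -h
end

section
/- Let ι be a type, let ℓ : ι → ℝ satisfy ℓ(i) ≥ 0 for all i, and let C ≥ 0 be a real number such that for every t ≥ 0 the set {i ∈ ι : ℓ(i) ≤ t} is finite with cardinality at most C·e^t. Let L ≥ 1 be real, let F : ℝ → ℝ vanish outside the interval [0, L], and let M ≥ 0 satisfy |F(x)|·e^x ≤ M for all x ∈ [0, L]. Then the family (|F(ℓ(i))|)_{i∈ι} is summable and ∑_{i∈ι} |F(ℓ(i))| ≤ 7·C·L·M. -/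
open Real

/-- Abstract form of the counting-to-summation bound (Lemma 6.4 of the paper):
if the number of indices with `ℓ(i) ≤ t` is at most `C·e^t`, `F` vanishes outside
`[0, L]` with `|F(x)|·e^x ≤ M` there, then `∑_i |F(ℓ(i))| ≤ 7·C·L·M`. -/
theorem sum_over_geodesics_bound {ι : Type*} (ℓ : ι → ℝ) (hℓ : ∀ i, 0 ≤ ℓ i)
    (C : ℝ) (hC : 0 ≤ C)
    (hcount : ∀ t : ℝ, 0 ≤ t →
      {i : ι | ℓ i ≤ t}.Finite ∧ ({i : ι | ℓ i ≤ t}.ncard : ℝ) ≤ C * Real.exp t)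
    (L : ℝ) (hL : 1 ≤ L)
    (F : ℝ → ℝ) (hF : ∀ x : ℝ, x ∉ Set.Icc (0 : ℝ) L → F x = 0)
    (M : ℝ) (hM : 0 ≤ M)
    (hFM : ∀ x ∈ Set.Icc (0 : ℝ) L, |F x| * Real.exp x ≤ M) :
    Summable (fun i => |F (ℓ i)|) ∧ ∑' i, |F (ℓ i)| ≤ 7 * C * L * M := by
  have hL0 : (0:ℝ) ≤ L := by linarith
  have hSfin := (hcount L hL0).1
  set S : Finset ι := hSfin.toFinset with hS
  have hmemS : ∀ i, i ∈ S ↔ ℓ i ≤ L := by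
    intro i; simp [hS, Set.Finite.mem_toFinset]
  have hzero : ∀ i ∉ S, |F (ℓ i)| = 0 := by
    intro i hi
    rw [hmemS] at hi
    have : F (ℓ i) = 0 := hF _ (by simp [Set.mem_Icc]; intro _; linarith)
    simp [this]
  have hsummable : Summable (fun i => |F (ℓ i)|) :=
    summable_of_ne_finset_zero hzero
  refine ⟨hsummable, ?_⟩
  rw [tsum_eq_sum hzero]
  -- pointwise bound
  have hpt : ∀ i ∈ S, |F (ℓ i)| ≤ M * Real.exp (-(ℓ i)) := by
    intro i hi
    rw [hmemS] at hi
    have hx : ℓ i ∈ Set.Icc (0:ℝ) L := ⟨hℓ i, hi⟩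
    have := hFM _ hx
    have hpos : 0 < Real.exp (ℓ i) := Real.exp_pos _
    rw [Real.exp_neg, ← div_eq_mul_inv, le_div_iff₀ hpos]
    linarith [this]
  set n : ℕ := ⌊L⌋₊ with hn
  have hmaps : ∀ i ∈ S, ⌊ℓ i⌋₊ ∈ Finset.range (n+1) := by
    intro i hi
    rw [hmemS] at hi
    simp only [Finset.mem_range, Nat.lt_succ_iff]
    exact Nat.floor_le_floor hi
  have hsplit := Finset.sum_fiberwise_of_maps_to hmaps (fun i => |F (ℓ i)|)
  rw [← hsplit]
  have hinner : ∀ k ∈ Finset.range (n+1),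
      ∑ i ∈ S.filter (fun i => ⌊ℓ i⌋₊ = k), |F (ℓ i)| ≤ C * M * Real.exp 1 := by
    intro k _
    have hk1 : (0:ℝ) ≤ (k:ℝ) + 1 := by positivity
    obtain ⟨hfin, hcard⟩ := hcount ((k:ℝ)+1) hk1
    have hsub : S.filter (fun i => ⌊ℓ i⌋₊ = k) ⊆ hfin.toFinset := by
      intro i hi
      simp only [Finset.mem_filter] at hi
      rw [Set.Finite.mem_toFinset]
      have := Nat.lt_floor_add_one (ℓ i)
      rw [hi.2] at this
      exact le_of_lt this
    calc ∑ i ∈ S.filter (fun i => ⌊ℓ i⌋₊ = k), |F (ℓ i)|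
        ≤ ∑ _i ∈ S.filter (fun i => ⌊ℓ i⌋₊ = k), M * Real.exp (-(k:ℝ)) := by
          apply Finset.sum_le_sum
          intro i hi
          simp only [Finset.mem_filter] at hi
          calc |F (ℓ i)| ≤ M * Real.exp (-(ℓ i)) := hpt i hi.1
            _ ≤ M * Real.exp (-(k:ℝ)) := by
                apply mul_le_mul_of_nonneg_left _ hM
                apply Real.exp_le_exp.2
                have : (k:ℝ) ≤ ℓ i := by
                  rw [← hi.2]; exact Nat.floor_le (hℓ i)
                linarith
      _ = ((S.filter (fun i => ⌊ℓ i⌋₊ = k)).card : ℝ) * (M * Real.exp (-(k:ℝ))) := by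
          rw [Finset.sum_const, nsmul_eq_mul]
      _ ≤ (C * Real.exp ((k:ℝ)+1)) * (M * Real.exp (-(k:ℝ))) := by
          apply mul_le_mul_of_nonneg_right _ (by positivity)
          calc ((S.filter (fun i => ⌊ℓ i⌋₊ = k)).card : ℝ)
              ≤ (hfin.toFinset.card : ℝ) := by
                exact_mod_cast Finset.card_le_card hsub
            _ = ({i : ι | ℓ i ≤ (k:ℝ)+1}.ncard : ℝ) := by
                rw [Set.ncard_eq_toFinset_card _ hfin]
            _ ≤ C * Real.exp ((k:ℝ)+1) := hcard
      _ = C * M * Real.exp 1 := by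
          have h : Real.exp ((k:ℝ)+1) * Real.exp (-(k:ℝ)) = Real.exp 1 := by
            rw [← Real.exp_add]; norm_num
          linear_combination (C*M) * h
  calc ∑ k ∈ Finset.range (n+1), ∑ i ∈ S.filter (fun i => ⌊ℓ i⌋₊ = k), |F (ℓ i)|
      ≤ ∑ _k ∈ Finset.range (n+1), C * M * Real.exp 1 :=
        Finset.sum_le_sum hinner
    _ = ((n:ℝ)+1) * (C * M * Real.exp 1) := by
        rw [Finset.sum_const, Finset.card_range, nsmul_eq_mul]; push_cast; ring
    _ ≤ (2*L) * (C * M * Real.exp 1) := by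
        apply mul_le_mul_of_nonneg_right _ (by positivity)
        have : (n:ℝ) ≤ L := Nat.floor_le hL0
        linarith
    _ ≤ 7 * C * L * M := by
        have he : Real.exp 1 ≤ 2.7182818286 := Real.exp_one_lt_d9.le
        nlinarith [mul_nonneg (mul_nonneg hC hM) hL0, mul_nonneg hC hM,
          mul_nonneg (mul_nonneg hC hM) (by linarith : (0:ℝ) ≤ L)]
end
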